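/- Let Φ(y, z) = f(y) + ⟨y, z⟩ where f : ℝ^n → ℝ is convex, and suppose for a sequence (y^k) and all z in a subspace E^⊥ one has Φ(ȳ^k, z) − Φ(y*, z) ≤ h(y*, z)/(2k), where y* ∈ E, ȳ^k := (1/k) Σ_{t=1}^k y^t, and h(y*, z) = c₁ + c₂‖z‖² with constants c₁, c₂ ≥ 0. Then choosing z = 2‖z*‖ · Π_{E^⊥} ȳ^k / ‖Π_{E^⊥} ȳ^k‖ (when Π_{E^⊥} ȳ^k ≠ 0), with z* := −∇f(y*) ∈ E^⊥, yields f(ȳ^k) − f(y*) + 2‖z*‖‖Π_{E^⊥} ȳ^k‖ ≤ (c₁ + 4c₂‖z*‖²)/(2k). -/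

import Mathlib

/-- From the saddle-point inequality of Lemma 1, choosing
z = 2‖z*‖ Π_{E^⊥} ȳ^k / ‖Π_{E^⊥} ȳ^k‖ yields the merit bound. -/
theorem stmt_14 {n : ℕ} (f : EuclideanSpace ℝ (Fin n) → ℝ)
    (f' : EuclideanSpace ℝ (Fin n) → EuclideanSpace ℝ (Fin n))
    (hconv : ConvexOn ℝ Set.univ f)
    (hgrad : ∀ x, HasGradientAt f (f' x) x)
    (E : Submodule ℝ (EuclideanSpace ℝ (Fin n)))
    (ystar : EuclideanSpace ℝ (Fin n)) (hystar : ystar ∈ E)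
    (zstar : EuclideanSpace ℝ (Fin n)) (hzstar : zstar = -f' ystar) (hzperp : zstar ∈ Eᗮ)
    (y ybar : ℕ → EuclideanSpace ℝ (Fin n))
    (hbar : ∀ k : ℕ, 1 ≤ k → ybar k = ((k : ℝ))⁻¹ • ∑ t ∈ Finset.Icc 1 k, y t)
    (c₁ c₂ : ℝ) (hc₁ : 0 ≤ c₁) (hc₂ : 0 ≤ c₂)
    (hsaddle : ∀ k : ℕ, 1 ≤ k → ∀ z ∈ Eᗮ,
      (f (ybar k) + inner ℝ (ybar k) z) - (f ystar + inner ℝ ystar z) ≤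
        (c₁ + c₂ * ‖z‖ ^ 2) / (2 * (k : ℝ))) :
    ∀ k : ℕ, 1 ≤ k →
      (Submodule.orthogonalProjectionOnto Eᗮ (ybar k) : EuclideanSpace ℝ (Fin n)) ≠ 0 →
      f (ybar k) - f ystar +
          2 * ‖zstar‖ * ‖(Submodule.orthogonalProjectionOnto Eᗮ (ybar k) : EuclideanSpace ℝ (Fin n))‖ ≤
        (c₁ + 4 * c₂ * ‖zstar‖ ^ 2) / (2 * (k : ℝ)) := by
  intro k hk hp
  set p : EuclideanSpace ℝ (Fin n) :=
    (Submodule.orthogonalProjectionOnto Eᗮ (ybar k) : EuclideanSpace ℝ (Fin n)) with hpdef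
  have hpnorm : ‖p‖ ≠ 0 := norm_ne_zero_iff.mpr hp
  set z : EuclideanSpace ℝ (Fin n) := (2 * ‖zstar‖ / ‖p‖) • p with hzdef
  have hzmem : z ∈ Eᗮ := Submodule.smul_mem _ _ (Submodule.coe_mem _)
  have hinner_ystar : (inner ℝ ystar z : ℝ) = 0 :=
    Submodule.inner_right_of_mem_orthogonal hystar hzmem
  have hip : (inner ℝ (ybar k) p : ℝ) = ‖p‖ ^ 2 := by
    have h0 : (inner ℝ (ybar k - p) p : ℝ) = 0 :=
      Eᗮ.starProjection_inner_eq_zero (ybar k) p (Submodule.coe_mem _)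
    have := inner_sub_left (𝕜 := ℝ) (ybar k) p p
    rw [h0] at this
    have : (inner ℝ (ybar k) p : ℝ) = inner ℝ p p := by linarith [this]
    rw [this, real_inner_self_eq_norm_sq]
  have hinner_ybar : (inner ℝ (ybar k) z : ℝ) = 2 * ‖zstar‖ * ‖p‖ := by
    rw [hzdef, real_inner_smul_right, hip]
    field_simp
  have hznorm : ‖z‖ ^ 2 = 4 * ‖zstar‖ ^ 2 := by
    rw [hzdef, norm_smul]
    rw [Real.norm_eq_abs, abs_div, abs_of_nonneg (by positivity : (0:ℝ) ≤ 2 * ‖zstar‖),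
      abs_of_nonneg (norm_nonneg p)]
    field_simp
    ring
  have h := hsaddle k hk z hzmem
  rw [hinner_ystar, hinner_ybar, hznorm] at h
  have h4 : c₂ * (4 * ‖zstar‖ ^ 2) = 4 * c₂ * ‖zstar‖ ^ 2 := by ring
  rw [h4] at h
  linarith [h]
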